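/- There exists a constant C > 0 such that for every integer K ≥ 1 the extended non-uniform discretization z_0 := sin²(π/(4K)), z_i := sin²(πi/(2K)) for i ∈ {1, …, K−1}, z_K := cos²(π/(4K)), with gaps d_i := z_i − z_{i−1}, satisfies for every i ∈ {1, …, K}: d_i² / (z_i·(1 − z_i)) ≤ C/K² and d_i² / (z_{i−1}·(1 − z_{i−1})) ≤ C/K². -/

import Mathlib

/-!
Write `z_i = sin² θ_i`, where `θ_i` is `π i / (2K)` clamped to `[π/(4K), π/2 − π/(4K)]`.
Consecutive angles differ by at most `π/(2K)`, and every `2θ_i` lies in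
`[π/(2K), π − π/(2K)]`, so `sin 2θ_i ≥ 1/K` by Jordan's inequality. Since
`sin² b − sin² a = sin (a + b) sin (b − a)` and `z(1 − z) = (sin 2θ)² / 4`, a gap over the
variance at either endpoint is `O((b − a)²)` as long as `b − a = O(sin 2c)`.
-/

open Real

/-- The extended non-uniform discretization point: `z_0 = sin²(π/(4K))`,
`z_i = sin²(πi/(2K))` for `1 ≤ i ≤ K−1`, and `z_K = cos²(π/(4K))`. -/
noncomputable def zext (K i : ℕ) : ℝ :=
  if i = 0 then Real.sin (π / (4 * K)) ^ 2
  else if i = K then Real.cos (π / (4 * K)) ^ 2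
  else Real.sin (π * i / (2 * K)) ^ 2

theorem Real.sin_sq_sub_sin_sq (a b : ℝ) :
    sin b ^ 2 - sin a ^ 2 = sin (a + b) * sin (b - a) := by
  rw [sin_add, sin_sub]
  linear_combination sin a ^ 2 * sin_sq_add_cos_sq b - sin b ^ 2 * sin_sq_add_cos_sq a

theorem Real.sin_sq_mul_one_sub_sin_sq (x : ℝ) :
    sin x ^ 2 * (1 - sin x ^ 2) = (sin (2 * x) / 2) ^ 2 := by
  rw [sin_two_mul]
  linear_combination (-sin x ^ 2) * sin_sq_add_cos_sq x

theorem Real.mul_le_sin_of_le_of_le_pi_sub {x y : ℝ} (hy : 0 ≤ y) (hyx : y ≤ x)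
    (hxy : x ≤ π - y) : 2 / π * y ≤ sin x := by
  rcases le_total x (π / 2) with hx | hx
  · exact (by gcongr : 2 / π * y ≤ 2 / π * x).trans (mul_le_sin (hy.trans hyx) hx)
  · rw [← sin_pi_sub]
    exact (by gcongr; linarith : 2 / π * y ≤ 2 / π * (π - x)).trans
      (mul_le_sin (by linarith) (by linarith))

theorem Real.sq_sin_sq_sub_sin_sq_div_le {a b c M ε : ℝ} (hε : 0 < ε) (hac : a ≤ c)
    (hcb : c ≤ b) (hgap : b - a ≤ M * ε) (hsin : ε ≤ sin (2 * c)) :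
    (sin b ^ 2 - sin a ^ 2) ^ 2 / (sin c ^ 2 * (1 - sin c ^ 2)) ≤ (2 * (1 + M) * M * ε) ^ 2 := by
  set s := sin (2 * c)
  have hs : 0 < s := hε.trans_le hsin
  have hM : 0 ≤ M := nonneg_of_mul_nonneg_left (by linarith) hε
  have hsin_add : |sin (a + b)| ≤ (1 + M) * s :=
    calc |sin (a + b)| ≤ s + |a + b - 2 * c| := by
          linarith [abs_sub_abs_le_abs_sub (sin (a + b)) s, abs_of_pos hs,
            abs_sin_sub_sin_le (a + b) (2 * c)]
      _ ≤ s + M * ε := by gcongr; rw [abs_le]; constructor <;> linarith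
      _ ≤ (1 + M) * s := by nlinarith
  have hsin_sub : |sin (b - a)| ≤ M * ε :=
    abs_sin_le_abs.trans ((abs_of_nonneg (by linarith)).trans_le hgap)
  have hdiff : |sin b ^ 2 - sin a ^ 2| ≤ (1 + M) * s * (M * ε) := by
    rw [sin_sq_sub_sin_sq, abs_mul]
    exact mul_le_mul hsin_add hsin_sub (abs_nonneg _) (by positivity)
  rw [sin_sq_mul_one_sub_sin_sq, div_le_iff₀ (by positivity)]
  calc (sin b ^ 2 - sin a ^ 2) ^ 2 = |sin b ^ 2 - sin a ^ 2| ^ 2 := (sq_abs _).symm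
    _ ≤ ((1 + M) * s * (M * ε)) ^ 2 := pow_le_pow_left₀ (abs_nonneg _) hdiff 2
    _ = (2 * (1 + M) * M * ε) ^ 2 * (s / 2) ^ 2 := by ring

theorem max_min_sub_max_min_le {α : Type*} [AddCommGroup α] [LinearOrder α]
    [IsOrderedAddMonoid α] (a b : α) {x y : α} (hxy : x ≤ y) :
    max a (min b y) - max a (min b x) ≤ y - x := by
  rw [sub_le_iff_le_add']
  refine max_le (le_add_of_le_of_nonneg (le_max_left _ _) (sub_nonneg.mpr hxy)) ?_
  calc min b y ≤ min b x + (y - x) := by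
        rw [← min_add_add_right, add_sub_cancel]
        exact min_le_min (le_add_of_nonneg_right (sub_nonneg.mpr hxy)) le_rfl
    _ ≤ max a (min b x) + (y - x) := by gcongr; exact le_max_right _ _

noncomputable def zextAngle (K i : ℕ) : ℝ :=
  max (π / (4 * K)) (min (π / 2 - π / (4 * K)) (π * i / (2 * K)))

section zextAngle

variable {K : ℕ}

theorem two_mul_pi_div_four_le (hK : 1 ≤ K) : 2 * (π / (4 * K)) ≤ π / 2 := by
  have hK' : (4 : ℝ) ≤ 4 * K := by norm_cast; omega
  linarith [div_le_div_of_nonneg_left pi_pos.le (by norm_num) hK']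

theorem zext_eq_sin_zextAngle_sq (hK : 1 ≤ K) {i : ℕ} (hi : i ≤ K) :
    zext K i = sin (zextAngle K i) ^ 2 := by
  have hu : 0 ≤ π / (4 * K) := by positivity
  have huv := two_mul_pi_div_four_le hK
  unfold zext zextAngle
  split_ifs with h0 hiK
  · subst h0
    rw [Nat.cast_zero, mul_zero, zero_div, max_eq_left ((min_le_right _ _).trans hu)]
  · rw [hiK, show π * K / (2 * K) = π / 2 by field_simp, min_eq_left (by linarith),
      max_eq_right (by linarith), sin_pi_div_two_sub]
  · have hi1 : (1 : ℝ) ≤ i := by exact_mod_cast Nat.one_le_iff_ne_zero.mpr h0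
    have hiK : (i : ℝ) + 1 ≤ K := by exact_mod_cast lt_of_le_of_ne hi hiK
    have hπK : 0 ≤ π * K := by positivity
    rw [min_eq_right, max_eq_right]
    · rw [div_le_div_iff₀ (by positivity) (by positivity)]
      nlinarith [mul_nonneg hπK (sub_nonneg.mpr hi1)]
    · rw [le_sub_iff_add_le, div_add_div _ _ (by positivity) (by positivity),
        div_le_div_iff₀ (by positivity) (by positivity)]
      nlinarith [mul_nonneg hπK (sub_nonneg.mpr hiK)]

theorem zextAngle_mem_Icc (hK : 1 ≤ K) (i : ℕ) :
    zextAngle K i ∈ Set.Icc (π / (4 * K)) (π / 2 - π / (4 * K)) :=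
  ⟨le_max_left _ _, max_le (by linarith [two_mul_pi_div_four_le hK]) (min_le_left _ _)⟩

theorem zextAngle_sub_zextAngle_pred {i : ℕ} (hi : 1 ≤ i) :
    0 ≤ zextAngle K i - zextAngle K (i - 1) ∧
      zextAngle K i - zextAngle K (i - 1) ≤ π / 2 * (1 / K) := by
  have hstep : π * (i : ℝ) / (2 * K) - π * ((i - 1 : ℕ) : ℝ) / (2 * K) = π / 2 * (1 / K) := by
    rw [Nat.cast_sub hi]; field_simp; ring
  have hle : π * ((i - 1 : ℕ) : ℝ) / (2 * K) ≤ π * (i : ℝ) / (2 * K) := by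
    linarith [show 0 ≤ π / 2 * (1 / (K : ℝ)) by positivity]
  exact ⟨sub_nonneg.mpr (max_le_max le_rfl (min_le_min le_rfl hle)),
    hstep ▸ max_min_sub_max_min_le _ _ hle⟩

theorem one_div_le_sin_two_mul_zextAngle (hK : 1 ≤ K) (i : ℕ) :
    1 / (K : ℝ) ≤ sin (2 * zextAngle K i) := by
  obtain ⟨hlo, hhi⟩ := zextAngle_mem_Icc hK i
  have hK' : (0 : ℝ) < K := by exact_mod_cast hK
  have hhalf : π / (2 * K) = 2 * (π / (4 * K)) := by field_simp; ring
  have h := mul_le_sin_of_le_of_le_pi_sub (x := 2 * zextAngle K i) (y := π / (2 * K))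
    (by positivity) (by linarith) (by linarith)
  rwa [show 2 / π * (π / (2 * K)) = 1 / K by field_simp] at h

end zextAngle

/-- **Two-sided gap-to-variance bounds for the extended sin² discretization (Lemma 7).**
There is a universal constant `C > 0` such that for all `K ≥ 1` and `1 ≤ i ≤ K`,
with `d_i = z_i − z_{i−1}`, both `d_i²/(z_i(1 − z_i)) ≤ C/K²` and
`d_i²/(z_{i−1}(1 − z_{i−1})) ≤ C/K²`. -/
theorem extended_sinsq_discretization_gap_bounds :
    ∃ C > 0, ∀ K : ℕ, 1 ≤ K → ∀ i : ℕ, 1 ≤ i → i ≤ K →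
      (zext K i - zext K (i - 1)) ^ 2 / (zext K i * (1 - zext K i)) ≤ C / (K : ℝ) ^ 2 ∧
      (zext K i - zext K (i - 1)) ^ 2 / (zext K (i - 1) * (1 - zext K (i - 1)))
        ≤ C / (K : ℝ) ^ 2 := by
  refine ⟨(2 * (1 + π / 2) * (π / 2)) ^ 2, by positivity, fun K hK i hi hiK => ?_⟩
  rw [zext_eq_sin_zextAngle_sq hK hiK, zext_eq_sin_zextAngle_sq hK (by omega : i - 1 ≤ K)]
  obtain ⟨hle, hgap⟩ := zextAngle_sub_zextAngle_pred (K := K) hi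
  have hε : (0 : ℝ) < 1 / K := by positivity
  rw [show (2 * (1 + π / 2) * (π / 2)) ^ 2 / (K : ℝ) ^ 2
      = (2 * (1 + π / 2) * (π / 2) * (1 / K)) ^ 2 by ring]
  exact ⟨sq_sin_sq_sub_sin_sq_div_le hε (by linarith) le_rfl hgap
      (one_div_le_sin_two_mul_zextAngle hK i),
    sq_sin_sq_sub_sin_sq_div_le hε le_rfl (by linarith) hgap
      (one_div_le_sin_two_mul_zextAngle hK (i - 1))⟩
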